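/- Let A be a q×n complex matrix, W a nonzero n×q complex matrix, m a positive integer, and k = max(Ind(AW), Ind(WA)). Then for an n×q matrix X the following are equivalent: (1) X = A^{Ⓦ_m,W,†}; (2) A·X = (A^{⊕,W}·W)^{m-1}·A^{⊕,W}·(W·A)^m·W·A·A^† and X = W·A^{D,W}·W·A·X; (3) A·X = (A^{⊕,W}·W)^{m-1}·A^{⊕,W}·(W·A)^m·W·A·A^† and range(X) ⊆ range(W·A^{D,W}). -/

import Mathlib

open Matrix

/-- Index of a square matrix: least `d` with `rank (B^d) = rank (B^(d+1))`. -/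
noncomputable def matInd {ι : Type*} [Fintype ι] [DecidableEq ι] (B : Matrix ι ι ℂ) : ℕ :=
  sInf {d : ℕ | (B ^ d).rank = (B ^ (d + 1)).rank}

/-- `X` is the Moore-Penrose inverse of `A` (four Penrose equations). -/
noncomputable def IsMP {ι κ : Type*} [Fintype ι] [Fintype κ] (A : Matrix ι κ ℂ) (X : Matrix κ ι ℂ) : Prop :=
  A * X * A = A ∧ X * A * X = X ∧ (A * X)ᴴ = A * X ∧ (X * A)ᴴ = X * A

/-- Column space (range) of a matrix. -/
noncomputable def mrange {ι κ : Type*} [Fintype κ] (M : Matrix ι κ ℂ) : Submodule ℂ (ι → ℂ) :=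
  LinearMap.range M.mulVecLin

/-- Null space of a matrix. -/
noncomputable def mker {ι κ : Type*} [Fintype κ] (M : Matrix ι κ ℂ) : Submodule ℂ (κ → ℂ) :=
  LinearMap.ker M.mulVecLin

/-- `X` is the core-EP inverse of `B`. -/
noncomputable def IsCoreEP {ι : Type*} [Fintype ι] [DecidableEq ι] (B X : Matrix ι ι ℂ) : Prop :=
  X * B * X = X ∧ mrange X = mrange (B ^ matInd B) ∧ mrange Xᴴ = mrange (B ^ matInd B)

/-- `X` is the Drazin inverse of `B`. -/
noncomputable def IsDrazin {ι : Type*} [Fintype ι] [DecidableEq ι] (B X : Matrix ι ι ℂ) : Prop :=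
  X * B * X = X ∧ B * X = X * B ∧ B ^ (matInd B + 1) * X = B ^ matInd B

/-- `X` is the group inverse of `B`. -/
noncomputable def IsGroupInv {ι : Type*} [Fintype ι] (B X : Matrix ι ι ℂ) : Prop :=
  B * X * B = B ∧ X * B * X = X ∧ B * X = X * B

/-- Frobenius norm of a matrix. -/
noncomputable def frobNorm {ι κ : Type*} [Fintype ι] [Fintype κ] (M : Matrix ι κ ℂ) : ℝ :=
  Real.sqrt (∑ i, ∑ j, ‖M i j‖ ^ 2)

/-
Put `B = W * A`, let `T` be its core-EP inverse and `D` its Drazin inverse. Both `B * T` and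
`D * B` act as the identity on `range (B ^ Ind B) = range T`, so `W * A^{⊕,W} = B * T * T = T`
and `W * A^{D,W} = D * B * D = D`. Pushing `W` through the powers of `A^{⊕,W} * W` turns
`A^{Ⓦ_m,W,†}` into `Y = T^(m+1) * B^m * W * A * A^†` and the right-hand side of `A * X = ⋯` into
`A * Y`. Since `D * B * Y = Y`, either side condition gives `X = D * W * (A * X) = D * B * Y = Y`.
-/

section Range

variable {ι κ μ : Type*} [Fintype κ] [Fintype μ]

lemma mrange_mul (M : Matrix ι κ ℂ) (N : Matrix κ μ ℂ) :
    mrange (M * N) = (mrange N).map M.mulVecLin := by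
  simp [mrange, Matrix.mulVecLin_mul, LinearMap.range_comp]

lemma mrange_mul_le (M : Matrix ι κ ℂ) (N : Matrix κ μ ℂ) : mrange (M * N) ≤ mrange M := by
  rw [mrange, mrange, Matrix.mulVecLin_mul, LinearMap.range_comp]
  exact LinearMap.map_le_range

lemma mul_eq_self_of_mrange_le [Fintype ι] [DecidableEq μ] {P : Matrix ι ι ℂ}
    {M : Matrix ι κ ℂ} {X : Matrix ι μ ℂ} (hPM : P * M = M) (hX : mrange X ≤ mrange M) :
    P * X = X := by
  ext i j
  obtain ⟨u, hu⟩ := hX (LinearMap.mem_range_self X.mulVecLin (Pi.single j 1))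
  have hu : M *ᵥ u = X *ᵥ Pi.single j 1 := hu
  have hcol : (P * X) *ᵥ Pi.single j 1 = X *ᵥ Pi.single j 1 := by
    rw [← Matrix.mulVec_mulVec, ← hu, Matrix.mulVec_mulVec, hPM]
  simpa [Matrix.mulVec_single] using congrFun hcol i

end Range

section Index

variable {ι : Type*} [Fintype ι] [DecidableEq ι]

lemma rank_pow_matInd_succ (B : Matrix ι ι ℂ) :
    (B ^ (matInd B + 1)).rank = (B ^ matInd B).rank := by
  refine (Nat.sInf_mem (s := {d : ℕ | (B ^ d).rank = (B ^ (d + 1)).rank}) ?_).symm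
  by_contra hempty
  have hdrop (d : ℕ) : (B ^ (d + 1)).rank < (B ^ d).rank :=
    lt_of_le_of_ne (pow_succ B d ▸ Matrix.rank_mul_le_left _ _)
      fun h ↦ hempty ⟨d, h.symm⟩
  exact not_strictAnti_of_wellFoundedLT _
    (strictAnti_nat_of_succ_lt (f := fun d ↦ (B ^ d).rank) hdrop)

lemma mrange_pow_matInd_succ (B : Matrix ι ι ℂ) :
    mrange (B ^ (matInd B + 1)) = mrange (B ^ matInd B) :=
  Submodule.eq_of_le_of_finrank_le (pow_succ B _ ▸ mrange_mul_le _ _)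
    (rank_pow_matInd_succ B).ge

lemma IsCoreEP.mul_mul_self {B T : Matrix ι ι ℂ} (hT : IsCoreEP B T) : B * T * T = T := by
  have hidem : B * T * (B * T) = B * T := by
    rw [Matrix.mul_assoc, ← Matrix.mul_assoc T B T, hT.1]
  have hrange : mrange T ≤ mrange (B * T) := by
    rw [mrange_mul, hT.2.1, ← mrange_mul, ← pow_succ', mrange_pow_matInd_succ]
  exact mul_eq_self_of_mrange_le hidem hrange

lemma IsDrazin.mul_mul_eq_of_mrange_le {κ : Type*} [Fintype κ] [DecidableEq κ]
    {B D : Matrix ι ι ℂ} (hD : IsDrazin B D) {X : Matrix ι κ ℂ}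
    (hX : mrange X ≤ mrange (B ^ matInd B)) : D * B * X = X := by
  have hcomm : Commute B D := hD.2.1
  refine mul_eq_self_of_mrange_le ?_ hX
  rw [Matrix.mul_assoc, ← pow_succ', ← (hcomm.pow_left _).eq, hD.2.2]

end Index

lemma pow_mul_mul_eq_mul_pow {κ μ : Type*} [Fintype κ] [DecidableEq κ] [Fintype μ]
    [DecidableEq μ] (E : Matrix κ μ ℂ) (W : Matrix μ κ ℂ) (j : ℕ) :
    (E * W) ^ j * E = E * (W * E) ^ j := by
  induction j with
  | zero => simp
  | succ j ih =>
    rw [pow_succ', Matrix.mul_assoc, ih, ← Matrix.mul_assoc, Matrix.mul_assoc E W E, pow_succ',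
      Matrix.mul_assoc]

lemma eq_iff_of_mul_mul_eq_self {κ μ ν : Type*} [Fintype κ] [Fintype μ] [Fintype ν]
    [DecidableEq ν] {A : Matrix κ μ ℂ} {W : Matrix μ κ ℂ} {D : Matrix μ μ ℂ}
    {X Y : Matrix μ ν ℂ} (hD : D * (W * A) * D = D) (hY : D * (W * A) * Y = Y) :
    (X = Y ↔ A * X = A * Y ∧ X = D * W * A * X) ∧
      (X = Y ↔ A * X = A * Y ∧ mrange X ≤ mrange D) := by
  have hYrange : mrange Y ≤ mrange D := by
    rw [← hY, Matrix.mul_assoc]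
    exact mrange_mul_le _ _
  have hX_of (hAX : A * X = A * Y) (hX : D * (W * A) * X = X) : X = Y :=
    calc X = D * W * (A * X) := by
          rw [Matrix.mul_assoc D W, ← Matrix.mul_assoc W, ← Matrix.mul_assoc D, hX]
      _ = D * (W * A) * Y := by rw [hAX]; simp only [Matrix.mul_assoc]
      _ = Y := hY
  constructor
  · constructor
    · rintro rfl
      exact ⟨rfl, by simp only [Matrix.mul_assoc] at hY ⊢; exact hY.symm⟩
    · rintro ⟨hAX, hX⟩
      exact hX_of hAX (by simp only [Matrix.mul_assoc] at hX ⊢; exact hX.symm)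
  · constructor
    · rintro rfl
      exact ⟨rfl, hYrange⟩
    · rintro ⟨hAX, hX⟩
      exact hX_of hAX (mul_eq_self_of_mrange_le hD hX)

theorem stmt7_general {q n : ℕ} (A : Matrix (Fin q) (Fin n) ℂ) (W : Matrix (Fin n) (Fin q) ℂ)
    (m : ℕ) (hm : 0 < m)
    (Adag : Matrix (Fin n) (Fin q) ℂ)
    (WAD : Matrix (Fin n) (Fin n) ℂ) (hWAD : IsDrazin (W * A) WAD)
    (WAcep : Matrix (Fin n) (Fin n) ℂ) (hWAcep : IsCoreEP (W * A) WAcep)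
    (ADW AepW AWGm : Matrix (Fin q) (Fin n) ℂ) (AWGMP : Matrix (Fin n) (Fin q) ℂ)
    (hADW : ADW = A * (WAD * WAD))
    (hAepW : AepW = A * (WAcep * WAcep))
    (hAWGm : AWGm = (AepW * W) ^ m * AepW * (W * A) ^ m)
    (hAWGMP : AWGMP = W * AWGm * W * A * Adag)
    (X : Matrix (Fin n) (Fin q) ℂ) :
    (X = AWGMP ↔
      (A * X = (AepW * W) ^ (m - 1) * AepW * (W * A) ^ m * W * A * Adag ∧
        X = W * ADW * W * A * X)) ∧
    (X = AWGMP ↔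
      (A * X = (AepW * W) ^ (m - 1) * AepW * (W * A) ^ m * W * A * Adag ∧
        mrange X ≤ mrange (W * ADW))) := by
  have hWE : W * AepW = WAcep := by
    rw [hAepW, ← Matrix.mul_assoc, ← Matrix.mul_assoc]
    exact hWAcep.mul_mul_self
  have hWADW : W * ADW = WAD := by
    rw [hADW, ← Matrix.mul_assoc, ← Matrix.mul_assoc, hWAD.2.1, hWAD.1]
  have hAWGMP' : AWGMP = WAcep ^ (m + 1) * (W * A) ^ m * W * A * Adag := by
    rw [hAWGMP, hAWGm, pow_mul_mul_eq_mul_pow, hWE, pow_succ']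
    simp only [← Matrix.mul_assoc, hWE]
  have hrhs : (AepW * W) ^ (m - 1) * AepW * (W * A) ^ m * W * A * Adag =
      A * (WAcep ^ (m + 1) * (W * A) ^ m * W * A * Adag) := by
    rw [pow_mul_mul_eq_mul_pow, hWE, hAepW, show m + 1 = m - 1 + 1 + 1 by omega, pow_succ',
      pow_succ']
    simp only [Matrix.mul_assoc]
  have hfixed : WAD * (W * A) * (WAcep ^ (m + 1) * (W * A) ^ m * W * A * Adag) =
      WAcep ^ (m + 1) * (W * A) ^ m * W * A * Adag := by
    have hDBT : WAD * (W * A) * WAcep = WAcep := hWAD.mul_mul_eq_of_mrange_le hWAcep.2.1.le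
    rw [pow_succ']
    simp only [← Matrix.mul_assoc] at hDBT ⊢
    rw [hDBT]
  rw [hWADW, hrhs, hAWGMP']
  exact eq_iff_of_mul_mul_eq_self hWAD.1 hfixed

theorem stmt7 {q n : ℕ} (A : Matrix (Fin q) (Fin n) ℂ) (W : Matrix (Fin n) (Fin q) ℂ)
    (hW : W ≠ 0) (m : ℕ) (hm : 0 < m) (k : ℕ)
    (hk : k = max (matInd (A * W)) (matInd (W * A)))
    (Adag : Matrix (Fin n) (Fin q) ℂ) (hAdag : IsMP A Adag)
    (WAD : Matrix (Fin n) (Fin n) ℂ) (hWAD : IsDrazin (W * A) WAD)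
    (WAcep : Matrix (Fin n) (Fin n) ℂ) (hWAcep : IsCoreEP (W * A) WAcep)
    (ADW AepW AWGm : Matrix (Fin q) (Fin n) ℂ) (AWGMP : Matrix (Fin n) (Fin q) ℂ)
    (hADW : ADW = A * (WAD * WAD))
    (hAepW : AepW = A * (WAcep * WAcep))
    (hAWGm : AWGm = (AepW * W) ^ m * AepW * (W * A) ^ m)
    (hAWGMP : AWGMP = W * AWGm * W * A * Adag)
    (X : Matrix (Fin n) (Fin q) ℂ) :
    (X = AWGMP ↔
      (A * X = (AepW * W) ^ (m - 1) * AepW * (W * A) ^ m * W * A * Adag ∧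
        X = W * ADW * W * A * X)) ∧
    (X = AWGMP ↔
      (A * X = (AepW * W) ^ (m - 1) * AepW * (W * A) ^ m * W * A * Adag ∧
        mrange X ≤ mrange (W * ADW))) :=
  stmt7_general A W m hm Adag WAD hWAD WAcep hWAcep ADW AepW AWGm AWGMP hADW hAepW hAWGm hAWGMP X
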